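/- arXiv:2509.21127 — 2 statements merged into one kernel-verified Lean document; each statement's English description precedes it below -/
import Mathlib

section
/- Let (A, E, i, j, ∂) be an unrolled exact couple of bigraded abelian groups. Suppose it is right concentrated, i.e. there exists an integer s₀ such that for all s ≥ s₀ and all n, the map i : A n (s+1) → A n s is an isomorphism. Then the couple converges conditionally if and only if it converges strongly. -/
/-- An unrolled exact couple of bigraded abelian groups. -/
structure UnrolledExactCouple where
  A : ℤ → ℤ → AddCommGrpCat
  E : ℤ → ℤ → AddCommGrpCat
  i : ∀ n s : ℤ, A n (s + 1) →+ A n s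
  j : ∀ n s : ℤ, A n s →+ E n s
  d : ∀ n s : ℤ, E n s →+ A (n - 1) (s + 1)
  exact_ij : ∀ n s : ℤ, (i n s).range = (j n s).ker
  exact_jd : ∀ n s : ℤ, (j n s).range = (d n s).ker
  exact_di : ∀ n s : ℤ, (d n s).range = (i (n - 1) s).ker

namespace UnrolledExactCouple

variable (C : UnrolledExactCouple)

/-- Transport along an equality of the filtration index. -/
def cast (n : ℤ) {s t : ℤ} (h : s = t) : C.A n s →+ C.A n t := by
  subst h; exact AddMonoidHom.id _

/-- The `r`-fold composite `i^r : A n (s+r) →+ A n s` of the maps `i`. -/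
def ipow (n : ℤ) : ∀ (r : ℕ) (s : ℤ), C.A n (s + (r : ℤ)) →+ C.A n s
  | 0, s => C.cast n (by simp)
  | r + 1, s =>
      ((C.i n s).comp ((ipow n r (s + 1)).comp (C.cast n (by push_cast; ring))))

/-- The transition map `A n t →+ A n s` for `s ≤ t`, a composite of the maps `i`. -/
def tr (n : ℤ) (t s : ℤ) (h : s ≤ t) : C.A n t →+ C.A n s :=
  (C.ipow n (t - s).toNat s).comp
    (C.cast n (by rw [Int.toNat_of_nonneg (by omega : (0:ℤ) ≤ t - s)]; omega))

/-- The colimit `G n` of the direct system `(A n s)` (s decreasing) along the maps `i`. -/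
def G (n : ℤ) : Type :=
  AddCommGroup.DirectLimit (fun s : ℤᵒᵈ => C.A n (OrderDual.ofDual s))
    (fun s t h => C.tr n (OrderDual.ofDual s) (OrderDual.ofDual t) h)

noncomputable instance (n : ℤ) : AddCommGroup (C.G n) := by
  unfold G; infer_instance

/-- The structure map `κ_s : A n s →+ G n`. -/
noncomputable def kappa (n s : ℤ) : C.A n s →+ C.G n :=
  AddCommGroup.DirectLimit.of (fun s : ℤᵒᵈ => C.A n (OrderDual.ofDual s))
    (fun s t h => C.tr n (OrderDual.ofDual s) (OrderDual.ofDual t) h) (OrderDual.toDual s)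

/-- The abutment filtration `F^s G n := im κ_s`. -/
noncomputable def F (n s : ℤ) : AddSubgroup (C.G n) :=
  (C.kappa n s).range

/-- The `r`-cycles `Z_r^{n,s} := ∂⁻¹(im(i^r : A (n-1) (s+1+r) → A (n-1) (s+1)))`. -/
def Z (n s : ℤ) (r : ℕ) : AddSubgroup (C.E n s) :=
  ((C.ipow (n - 1) r (s + 1)).range).comap (C.d n s)

/-- The `r`-boundaries `B_r^{n,s} := j(ker(i^r : A n s → A n (s-r)))`. -/
def B (n s : ℤ) (r : ℕ) : AddSubgroup (C.E n s) :=
  ((C.tr n s (s - (r : ℤ)) (by omega)).ker).map (C.j n s)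

/-- The permanent cycles `Z_∞^{n,s} = ⋂_r Z_r^{n,s}`. -/
def Zinf (n s : ℤ) : AddSubgroup (C.E n s) := ⨅ r : ℕ, C.Z n s r

/-- The infinite boundaries `B_∞^{n,s} = ⋃_r B_r^{n,s}`. -/
def Binf (n s : ℤ) : AddSubgroup (C.E n s) := ⨆ r : ℕ, C.B n s r

/-- Conditional convergence: for every `n` the limit and `lim¹` of the tower
`(A n s)_s` vanish, i.e. the map `(a_s)_s ↦ (a_s - i(a_{s+1}))_s` is bijective. -/
def ConvergesConditionally : Prop :=
  ∀ n : ℤ, Function.Bijective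
    (fun (a : ∀ s : ℤ, C.A n s) => fun s : ℤ => a s - C.i n s (a (s + 1)))

/-- Strong convergence. -/
def ConvergesStrongly : Prop :=
  (∀ n : ℤ,
      (⨅ s : ℤ, C.F n s) = ⊥ ∧
      (∀ b : ℤ → C.G n, (∀ s, b s ∈ C.F n s) →
        ∃ x : ℤ → C.G n, (∀ s, x s ∈ C.F n s) ∧ ∀ s, x s - x (s + 1) = b s)) ∧
    (∀ n s : ℤ, C.Zinf n s = (C.d n s).ker)

end UnrolledExactCouple


/-!
Right concentration makes each kind of convergence equivalent to the vanishing of `A n s` for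
`s ≥ s₀`. The kernel of `(a_s) ↦ (a_s - i a_{s+1})` consists of the `i`-compatible families, and
since the `i` are bijective above `s₀`, every element of `A n s` with `s ≥ s₀` extends to such a
family; conversely, if the tower vanishes above `s₀`, finite sums invert the map. Similarly, an
element `a ∈ A n s` with `s ≥ s₀` lies in every `F^t`, so `κ_s a = 0` once `⋂ F^t = 0`, and `a`
dies in some `A n u`. Climbing back from `u` to `s`, each intermediate image `c` has `i c = 0` and
is divisible by every `i^r`, so `c = ∂x` with `x` a permanent cycle, whence `c = 0` when
`Z_∞ = ker ∂`. If the tower vanishes above `s₀`, then the filtration is finite and `Z_r = ker ∂` for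
large `r`.
-/

theorem Int.decreasing_induction {m : ℤ} {motive : ∀ s : ℤ, s ≤ m → Prop}
    (of_add_one : ∀ s (h : s < m), motive (s + 1) h → motive s h.le) (self : motive m le_rfl)
    (s : ℤ) (hs : s ≤ m) : motive s hs := by
  induction s, hs using Int.leInductionDown with
  | base => exact self
  | pred s hs ih => exact of_add_one (s - 1) (by omega) (by simpa only [sub_add_cancel] using ih)

theorem Int.sum_Ico_sub_sum_Ico_add_one {M : Type*} [AddCommGroup M] (g : ℤ → M) (s s₀ : ℤ) :
    ∑ t ∈ Finset.Ico s s₀, g t - ∑ t ∈ Finset.Ico (s + 1) s₀, g t = if s < s₀ then g s else 0 := by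
  split_ifs with hs
  · rw [← Finset.insert_Ico_add_one_left_eq_Ico hs, Finset.sum_insert (by simp),
      add_sub_cancel_right]
  · rw [Finset.Ico_eq_empty_of_le (not_lt.1 hs), Finset.Ico_eq_empty_of_le (by omega), sub_self]

namespace UnrolledExactCouple

variable (C : UnrolledExactCouple)

section Transition

variable (n : ℤ)

lemma cast_comp_cast {s t u : ℤ} (h₁ : s = t) (h₂ : t = u) :
    (C.cast n h₂).comp (C.cast n h₁) = C.cast n (h₁.trans h₂) := by
  subst h₁ h₂; rfl

lemma ipow_congr {r r' : ℕ} (h : r = r') (s : ℤ) :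
    C.ipow n r s = (C.ipow n r' s).comp (C.cast n (by rw [h])) := by
  subst h; rfl

lemma ipow_eq_tr (r : ℕ) (s : ℤ) : C.ipow n r s = C.tr n (s + r) s (by omega) := by
  rw [tr, C.ipow_congr n (by omega : r = (s + r - s).toNat)]

lemma tr_self_apply (s : ℤ) (x : C.A n s) : C.tr n s s le_rfl x = x := by
  rw [tr, C.ipow_congr n (by simp : (s - s).toNat = 0)]
  simp only [ipow, cast_comp_cast]
  rfl

lemma i_tr {s t : ℤ} (h : s + 1 ≤ t) (x : C.A n t) :
    C.i n s (C.tr n t (s + 1) h x) = C.tr n t s (by omega) x := by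
  suffices (C.i n s).comp (C.tr n t (s + 1) h) = C.tr n t s (by omega) from
    DFunLike.congr_fun this x
  rw [tr, tr, C.ipow_congr n (by omega : (t - s).toNat = (t - (s + 1)).toNat + 1)]
  simp only [ipow, AddMonoidHom.comp_assoc, cast_comp_cast]

lemma tr_tr {s t u : ℤ} (hst : s ≤ t) (htu : t ≤ u) (x : C.A n u) :
    C.tr n t s hst (C.tr n u t htu x) = C.tr n u s (hst.trans htu) x := by
  induction s, hst using Int.decreasing_induction with
  | self => exact C.tr_self_apply n t _
  | of_add_one s hs ih => rw [← C.i_tr n hs, ih, C.i_tr]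

lemma tr_bijective {s t : ℤ} (hst : s ≤ t)
    (hi : ∀ u, s ≤ u → u < t → Function.Bijective (C.i n u)) :
    Function.Bijective (C.tr n t s hst) := by
  induction s, hst using Int.decreasing_induction with
  | self =>
    rw [show ⇑(C.tr n t t le_rfl) = id from funext (C.tr_self_apply n t)]
    exact Function.bijective_id
  | of_add_one s hs ih =>
    rw [show ⇑(C.tr n t s hs.le) = C.i n s ∘ C.tr n t (s + 1) hs from
      funext fun x => (C.i_tr n hs x).symm]
    exact (hi s le_rfl hs).comp (ih fun u hu hut => hi u (by omega) hut)

lemma eq_tr_of_compatible {f : ∀ s, C.A n s} (hf : ∀ s, f s = C.i n s (f (s + 1)))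
    {s t : ℤ} (hst : s ≤ t) : f s = C.tr n t s hst (f t) := by
  induction s, hst using Int.decreasing_induction with
  | self => exact (C.tr_self_apply n t _).symm
  | of_add_one s hs ih => rw [hf s, ih]; exact C.i_tr n hs _

end Transition

section Abutment

variable (n : ℤ)

instance : DirectedSystem (fun s : ℤᵒᵈ => C.A n (OrderDual.ofDual s))
    (fun s t h => C.tr n (OrderDual.ofDual s) (OrderDual.ofDual t) h) where
  map_self _ x := C.tr_self_apply n _ x
  map_map _ _ _ hst htu x := C.tr_tr n htu hst x

lemma kappa_tr {s t : ℤ} (hst : s ≤ t) (x : C.A n t) :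
    C.kappa n s (C.tr n t s hst x) = C.kappa n t x :=
  AddCommGroup.DirectLimit.of_f (G := fun s : ℤᵒᵈ => C.A n (OrderDual.ofDual s))
    (f := fun s t h => C.tr n (OrderDual.ofDual s) (OrderDual.ofDual t) h) hst x

lemma exists_tr_eq_zero_of_kappa_eq_zero {s : ℤ} {a : C.A n s} (ha : C.kappa n s a = 0) :
    ∃ u, ∃ hus : u ≤ s, C.tr n s u hus a = 0 :=
  AddCommGroup.DirectLimit.of.zero_exact (G := fun s : ℤᵒᵈ => C.A n (OrderDual.ofDual s))
    (f := fun s t h => C.tr n (OrderDual.ofDual s) (OrderDual.ofDual t) h) (OrderDual.toDual s) a ha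

lemma F_antitone {s t : ℤ} (hst : s ≤ t) : C.F n t ≤ C.F n s := by
  rintro _ ⟨a, rfl⟩
  exact ⟨C.tr n t s hst a, C.kappa_tr n hst a⟩

lemma kappa_mem_iInf_F {s : ℤ} {a : C.A n s}
    (ha : ∀ w (hsw : s ≤ w), a ∈ (C.tr n w s hsw).range) : C.kappa n s a ∈ ⨅ t, C.F n t := by
  refine AddSubgroup.mem_iInf.2 fun t => ?_
  obtain ⟨a', rfl⟩ := ha (max s t) (le_max_left s t)
  rw [C.kappa_tr, ← C.kappa_tr n (le_max_right s t)]
  exact ⟨_, rfl⟩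

end Abutment

lemma mem_Zinf_iff {n s : ℤ} {x : C.E n s} :
    x ∈ C.Zinf n s ↔ ∀ r : ℕ, C.d n s x ∈ (C.ipow (n - 1) r (s + 1)).range :=
  AddSubgroup.mem_iInf

lemma ker_d_le_Zinf (n s : ℤ) : (C.d n s).ker ≤ C.Zinf n s := fun x hx =>
  C.mem_Zinf_iff.2 fun _ => by rw [hx]; exact zero_mem _

def RightConcentratedAt (s₀ : ℤ) : Prop :=
  ∀ s : ℤ, s₀ ≤ s → ∀ n : ℤ, Function.Bijective (C.i n s)

def VanishesFrom (s₀ : ℤ) : Prop :=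
  ∀ n s : ℤ, s₀ ≤ s → ∀ a : C.A n s, a = 0

lemma RightConcentratedAt.tr_bijective {C : UnrolledExactCouple} {s₀ : ℤ}
    (hC : C.RightConcentratedAt s₀) (n : ℤ) {s t : ℤ} (hs : s₀ ≤ s) (hst : s ≤ t) :
    Function.Bijective (C.tr n t s hst) :=
  C.tr_bijective n hst fun u hu _ => hC u (hs.trans hu) n

section Conditional

def towerDiff (n : ℤ) : (∀ s, C.A n s) →+ (∀ s, C.A n s) :=
  AddMonoidHom.id _ - AddMonoidHom.pi fun s => (C.i n s).comp (Pi.evalAddMonoidHom _ (s + 1))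

lemma convergesConditionally_iff :
    C.ConvergesConditionally ↔ ∀ n, Function.Bijective (C.towerDiff n) :=
  Iff.rfl

lemma mem_ker_towerDiff {n : ℤ} {f : ∀ s, C.A n s} :
    f ∈ (C.towerDiff n).ker ↔ ∀ s, f s = C.i n s (f (s + 1)) := by
  simp only [AddMonoidHom.mem_ker, funext_iff]
  exact forall_congr' fun s => sub_eq_zero

lemma exists_compatible_eq (n : ℤ) {s : ℤ}
    (hs : ∀ t (hst : s ≤ t), Function.Bijective (C.tr n t s hst)) (a : C.A n s) :
    ∃ f : ∀ t, C.A n t, (∀ t, f t = C.i n t (f (t + 1))) ∧ f s = a := by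
  choose p hp using fun t => (hs (max t s) (le_max_right t s)).2 a
  refine ⟨fun t => C.tr n (max t s) t (le_max_left t s) (p t), fun t => ?_, hp s⟩
  have hpt : p t = C.tr n (max (t + 1) s) (max t s) (by omega) (p (t + 1)) :=
    (hs (max t s) (le_max_right t s)).1 (by rw [hp, C.tr_tr, hp])
  simp only [C.i_tr, hpt, C.tr_tr]

lemma RightConcentratedAt.vanishesFrom_of_convergesConditionally {C : UnrolledExactCouple}
    {s₀ : ℤ} (hC : C.RightConcentratedAt s₀) (hcc : C.ConvergesConditionally) :
    C.VanishesFrom s₀ := by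
  intro n s hs a
  obtain ⟨f, hf, rfl⟩ := C.exists_compatible_eq n (fun t => hC.tr_bijective n hs) a
  have hf0 : f = 0 :=
    (injective_iff_map_eq_zero _).1 (C.convergesConditionally_iff.1 hcc n).1 f
      (C.mem_ker_towerDiff.2 hf)
  rw [hf0, Pi.zero_apply]

lemma VanishesFrom.convergesConditionally {C : UnrolledExactCouple} {s₀ : ℤ}
    (hC : C.VanishesFrom s₀) : C.ConvergesConditionally := by
  refine C.convergesConditionally_iff.2 fun n => ?_
  refine ⟨(injective_iff_map_eq_zero _).2 fun f hf => funext fun s => ?_, fun b => ?_⟩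
  · rw [C.eq_tr_of_compatible n (C.mem_ker_towerDiff.1 hf) (le_max_left s s₀),
      hC n _ (le_max_right s s₀) (f _), map_zero, Pi.zero_apply]
  · let g : ∀ s t : ℤ, C.A n s := fun s t => if hst : s ≤ t then C.tr n t s hst (b t) else 0
    refine ⟨fun s => ∑ t ∈ Finset.Ico s s₀, g s t, funext fun s => ?_⟩
    have hi : C.i n s (∑ t ∈ Finset.Ico (s + 1) s₀, g (s + 1) t) =
        ∑ t ∈ Finset.Ico (s + 1) s₀, g s t := by
      rw [map_sum]
      refine Finset.sum_congr rfl fun t ht => ?_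
      have hst : s + 1 ≤ t := (Finset.mem_Ico.1 ht).1
      simp only [g, dif_pos hst, dif_pos (by omega : s ≤ t), C.i_tr]
    change ∑ t ∈ Finset.Ico s s₀, g s t - C.i n s (∑ t ∈ Finset.Ico (s + 1) s₀, g (s + 1) t) = b s
    rw [hi, Int.sum_Ico_sub_sum_Ico_add_one]
    split_ifs with hs
    · simp only [g, dif_pos le_rfl, C.tr_self_apply]
    · exact (hC n s (not_lt.1 hs) _).symm

end Conditional

section Strong

lemma VanishesFrom.F_eq_bot {C : UnrolledExactCouple} {s₀ : ℤ} (hC : C.VanishesFrom s₀)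
    (n : ℤ) {s : ℤ} (hs : s₀ ≤ s) : C.F n s = ⊥ := by
  rw [eq_bot_iff]
  rintro _ ⟨a, rfl⟩
  rw [hC n s hs a, map_zero]
  exact zero_mem _

lemma VanishesFrom.Zinf_eq_ker_d {C : UnrolledExactCouple} {s₀ : ℤ} (hC : C.VanishesFrom s₀)
    (n s : ℤ) : C.Zinf n s = (C.d n s).ker := by
  refine le_antisymm (fun x hx => ?_) (C.ker_d_le_Zinf n s)
  obtain ⟨y, hy⟩ := C.mem_Zinf_iff.1 hx (s₀ - (s + 1)).toNat
  rw [AddMonoidHom.mem_ker, ← hy, hC _ _ (by omega) y, map_zero]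

lemma VanishesFrom.convergesStrongly {C : UnrolledExactCouple} {s₀ : ℤ}
    (hC : C.VanishesFrom s₀) : C.ConvergesStrongly := by
  refine ⟨fun n => ⟨?_, fun b hb => ?_⟩, hC.Zinf_eq_ker_d⟩
  · exact eq_bot_iff.2 ((iInf_le _ s₀).trans (hC.F_eq_bot n le_rfl).le)
  · refine ⟨fun s => ∑ t ∈ Finset.Ico s s₀, b t, fun s => ?_, fun s => ?_⟩
    · exact sum_mem fun t ht => C.F_antitone n (Finset.mem_Ico.1 ht).1 (hb t)
    rw [Int.sum_Ico_sub_sum_Ico_add_one]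
    split_ifs with hs
    · rfl
    · exact (AddSubgroup.mem_bot.1 (hC.F_eq_bot n (not_lt.1 hs) ▸ hb s)).symm

-- By exactness `c = ∂x`, and divisibility of `c` by every `i^r` says that `x ∈ Z_∞ = ker ∂`.
lemma eq_zero_of_i_eq_zero {m t : ℤ} (hZ : C.Zinf m t = (C.d m t).ker)
    {c : C.A (m - 1) (t + 1)} (hc : C.i (m - 1) t c = 0)
    (hdiv : ∀ r : ℕ, c ∈ (C.ipow (m - 1) r (t + 1)).range) : c = 0 := by
  obtain ⟨x, rfl⟩ : c ∈ (C.d m t).range := by rwa [C.exact_di]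
  exact (hZ ▸ C.mem_Zinf_iff.2 hdiv : x ∈ (C.d m t).ker)

lemma eq_zero_of_tr_eq_zero {m : ℤ} (hZ : ∀ t, C.Zinf m t = (C.d m t).ker) {s : ℤ}
    {a : C.A (m - 1) s} (hdiv : ∀ w (hsw : s ≤ w), a ∈ (C.tr (m - 1) w s hsw).range)
    {u : ℤ} (hus : u ≤ s) (ha : C.tr (m - 1) s u hus a = 0) : a = 0 := by
  suffices ∀ t (hut : u ≤ t) (hts : t ≤ s), C.tr (m - 1) s t hts a = 0 by
    simpa only [C.tr_self_apply] using this s hus le_rfl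
  intro t hut
  induction t, hut using Int.leInduction with
  | base => exact fun _ => ha
  | succ t _ ih =>
    intro hts
    refine C.eq_zero_of_i_eq_zero (hZ t) (by rw [C.i_tr]; exact ih (by omega)) fun r => ?_
    obtain ⟨a', rfl⟩ := hdiv (max s (t + 1 + r)) (le_max_left _ _)
    rw [C.ipow_eq_tr, C.tr_tr,
      ← C.tr_tr (m - 1) (by omega : t + 1 ≤ t + 1 + r) (le_max_right _ _)]
    exact ⟨_, rfl⟩

lemma RightConcentratedAt.vanishesFrom_of_convergesStrongly {C : UnrolledExactCouple}
    {s₀ : ℤ} (hC : C.RightConcentratedAt s₀) (hcs : C.ConvergesStrongly) :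
    C.VanishesFrom s₀ := by
  intro n s hs a
  -- index the tower as `A (m - 1)`, the target of `∂ : E m _ → A (m - 1) _`
  obtain ⟨m, rfl⟩ : ∃ m, n = m - 1 := ⟨n + 1, by ring⟩
  have hdiv : ∀ w (hsw : s ≤ w), a ∈ (C.tr (m - 1) w s hsw).range :=
    fun w hsw => (hC.tr_bijective (m - 1) hs hsw).2 a
  have hκ : C.kappa (m - 1) s a = 0 := by
    simpa only [(hcs.1 (m - 1)).1, AddSubgroup.mem_bot] using C.kappa_mem_iInf_F (m - 1) hdiv
  obtain ⟨u, hus, ha⟩ := C.exists_tr_eq_zero_of_kappa_eq_zero (m - 1) hκ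
  exact C.eq_zero_of_tr_eq_zero (hcs.2 m) hdiv hus ha

end Strong

end UnrolledExactCouple

/-- **Boardman, Theorem 6.1.**  For a right-concentrated unrolled exact couple (the maps
`i : A n (s+1) → A n s` are isomorphisms for all large `s`), conditional convergence is
equivalent to strong convergence. -/
theorem UnrolledExactCouple.rightConcentrated_conditionally_iff_strongly
    (C : UnrolledExactCouple)
    (h : ∃ s₀ : ℤ, ∀ s : ℤ, s₀ ≤ s → ∀ n : ℤ, Function.Bijective (C.i n s)) :
    C.ConvergesConditionally ↔ C.ConvergesStrongly := by
  obtain ⟨s₀, hC⟩ : ∃ s₀, C.RightConcentratedAt s₀ := h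
  exact ⟨fun hcc => (hC.vanishesFrom_of_convergesConditionally hcc).convergesStrongly,
    fun hcs => (hC.vanishesFrom_of_convergesStrongly hcs).convergesConditionally⟩
end

section
/- Let (A, E, i, j, ∂) be an unrolled exact couple of bigraded abelian groups, and suppose there exists an integer s₀ such that E n s = 0 for all n and all s < s₀. Then for all integers n, s and every natural number r with (r : ℤ) ≥ s - s₀, one has B_r^{n,s} = B_∞^{n,s}; that is, the groups of r-boundaries in bidegree (n, s) stabilize from stage max(s - s₀, 0) onwards. -/
/-! The `r`-boundaries `j(ker i^r)` grow with `r`. By exactness the kernel of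
`i : A (n-1) (t+1) → A (n-1) t` is the image of `∂` out of `E n t`, which vanishes for `t < s₀`.
So all maps `i` below `s₀` are injective, and once `s - r ≤ s₀` composing `i^r` with further
maps `i` no longer enlarges its kernel. -/

namespace UnrolledExactCouple

variable (C : UnrolledExactCouple) (n : ℤ)

lemma cast_cast {s t u : ℤ} (h₁ : s = t) (h₂ : t = u) (x : C.A n s) :
    C.cast n h₂ (C.cast n h₁ x) = C.cast n (h₁.trans h₂) x := by
  subst h₁ h₂; rfl

lemma ipow_congr_s6 {r₁ r₂ : ℕ} (hr : r₁ = r₂) (s : ℤ) (x : C.A n (s + r₁)) :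
    C.ipow n r₁ s x = C.ipow n r₂ s (C.cast n (by rw [hr]) x) := by
  subst hr; rfl

lemma tr_eq_ipow {u t : ℤ} (h : t ≤ u) (k : ℕ) (hk : u = t + k) (x : C.A n u) :
    C.tr n u t h x = C.ipow n k t (C.cast n hk x) := by
  rw [tr, AddMonoidHom.comp_apply, C.ipow_congr_s6 n (by omega : (u - t).toNat = k), C.cast_cast]

lemma tr_self (u : ℤ) (x : C.A n u) : C.tr n u u le_rfl x = x := by
  rw [C.tr_eq_ipow n le_rfl 0 (by simp), ipow, C.cast_cast]
  rfl

lemma tr_succ {u t : ℤ} (h : t + 1 ≤ u) (x : C.A n u) :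
    C.tr n u t (by omega) x = C.i n t (C.tr n u (t + 1) h x) := by
  obtain ⟨k, hk⟩ : ∃ k : ℕ, u = t + 1 + k := ⟨(u - (t + 1)).toNat, by omega⟩
  rw [C.tr_eq_ipow n _ (k + 1) (by omega), C.tr_eq_ipow n h k hk, ipow]
  simp only [AddMonoidHom.comp_apply, C.cast_cast]

lemma tr_tr_s6 {u t t' : ℤ} (h : t ≤ u) (h' : t' ≤ t) (x : C.A n u) :
    C.tr n t t' h' (C.tr n u t h x) = C.tr n u t' (h'.trans h) x := by
  obtain ⟨k, hk⟩ : ∃ k : ℕ, t = t' + k := ⟨(t - t').toNat, by omega⟩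
  induction k generalizing t' with
  | zero =>
    obtain rfl : t' = t := by omega
    exact C.tr_self n _ _
  | succ k ih =>
    rw [C.tr_succ n (u := t) (t := t') (by omega), C.tr_succ n (u := u) (t := t') (by omega),
      ih (by omega) (by omega)]

lemma ker_tr_le_ker_tr {u t t' : ℤ} (h : t ≤ u) (h' : t' ≤ t) :
    (C.tr n u t h).ker ≤ (C.tr n u t' (h'.trans h)).ker := fun x hx => by
  rw [AddMonoidHom.mem_ker] at hx ⊢
  rw [← C.tr_tr_s6 n h h', hx, map_zero]

lemma tr_injective {t t' : ℤ} (h' : t' ≤ t)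
    (hi : ∀ m, t' ≤ m → m < t → Function.Injective (C.i n m)) :
    Function.Injective (C.tr n t t' h') := by
  obtain ⟨k, hk⟩ : ∃ k : ℕ, t = t' + k := ⟨(t - t').toNat, by omega⟩
  induction k generalizing t' with
  | zero =>
    obtain rfl : t' = t := by omega
    intro x y hxy
    rwa [C.tr_self, C.tr_self] at hxy
  | succ k ih =>
    intro x y hxy
    rw [C.tr_succ n (by omega) x, C.tr_succ n (by omega) y] at hxy
    exact ih (by omega) (fun m hm hmt => hi m (by omega) hmt) (by omega)
      (hi t' le_rfl (by omega) hxy)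

lemma ker_tr_le_ker_tr_of_injective {u t t' : ℤ} (h : t ≤ u) (h' : t' ≤ t)
    (hinj : Function.Injective (C.tr n t t' h')) :
    (C.tr n u t' (h'.trans h)).ker ≤ (C.tr n u t h).ker := fun x hx => by
  rw [AddMonoidHom.mem_ker, ← C.tr_tr_s6 n h h'] at hx
  exact hinj (hx.trans (map_zero _).symm)

lemma i_injective_of_E_trivial {s : ℤ} (hE : ∀ x : C.E n s, x = 0) :
    Function.Injective (C.i (n - 1) s) := by
  rw [← AddMonoidHom.ker_eq_bot_iff, ← C.exact_di n s, eq_bot_iff]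
  rintro _ ⟨x, rfl⟩
  rw [hE x, map_zero]
  exact zero_mem _

variable {n}

lemma B_mono (s : ℤ) : Monotone (C.B n s) := fun _ _ hrr' =>
  AddSubgroup.map_mono (C.ker_tr_le_ker_tr n _ (by omega))

lemma B_le_of_injective {s₀ : ℤ} (hi : ∀ t, t < s₀ → Function.Injective (C.i n t))
    (s : ℤ) {r : ℕ} (hr : s - s₀ ≤ (r : ℤ)) (r' : ℕ) : C.B n s r' ≤ C.B n s r := by
  rcases le_total r' r with hr' | hr'
  · exact C.B_mono s hr'
  · exact AddSubgroup.map_mono (C.ker_tr_le_ker_tr_of_injective n _ (by omega)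
      (C.tr_injective n _ fun m _ hm => hi m (by omega)))

end UnrolledExactCouple

/-- If `E n s = 0` for all `s < s₀`, then for every `n`, `s` and every natural number `r`
with `(r : ℤ) ≥ s - s₀`, the `r`-boundaries equal `B_∞^{n,s} = ⋃_{r'} B_{r'}^{n,s}`;
that is, the boundaries in bidegree `(n, s)` stabilize from stage `max (s - s₀) 0` on. -/
theorem UnrolledExactCouple.boundaries_stabilize
    (C : UnrolledExactCouple) (s₀ : ℤ)
    (h : ∀ n s : ℤ, s < s₀ → ∀ x : C.E n s, x = 0)
    (n s : ℤ) (r : ℕ) (hr : s - s₀ ≤ (r : ℤ)) :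
    (C.B n s r : Set (C.E n s)) = ⋃ r' : ℕ, (C.B n s r' : Set (C.E n s)) := by
  obtain ⟨m, rfl⟩ : ∃ m : ℤ, n = m - 1 := ⟨n + 1, by ring⟩
  have hi : ∀ t, t < s₀ → Function.Injective (C.i (m - 1) t) := fun t ht =>
    C.i_injective_of_E_trivial m (h m t ht)
  refine Set.Subset.antisymm ?_ (Set.iUnion_subset fun r' => C.B_le_of_injective hi s hr r')
  exact Set.subset_iUnion (fun r' : ℕ => (C.B (m - 1) s r' : Set (C.E (m - 1) s))) r
end
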